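/- arXiv:2304.02673 — 3 statements merged into one kernel-verified Lean document; each statement's English description precedes it below -/
import Mathlib

section
/- If Q and Q' are operators on H_N with [Q,Q'] = 0, then for every |ψ⟩ ∈ H_N the projected commutator satisfies the bound ‖[Q_p,Q'_p] V|ψ⟩‖ ≤ 2 ‖V‖² ‖T‖ ‖Q‖ ‖Q'‖ ‖V|ψ⟩‖, where T = V†V − I and ‖·‖ denotes the operator norm. -/
open ContinuousLinearMap

set_option maxHeartbeats 1000000 in
/-- If `[Q,Q'] = 0`, then the projected commutator satisfies
`‖[Q_p,Q'_p] Vψ‖ ≤ 2 ‖V‖² ‖T‖ ‖Q‖ ‖Q'‖ ‖Vψ‖` where `T = V†V − I`. -/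
theorem stmt_2 (N n : ℕ)
    (V : EuclideanSpace ℂ (Fin N) →L[ℂ] EuclideanSpace ℂ (Fin n))
    (Q Q' : EuclideanSpace ℂ (Fin N) →L[ℂ] EuclideanSpace ℂ (Fin N))
    (hcomm : Q ∘L Q' = Q' ∘L Q)
    (ψ : EuclideanSpace ℂ (Fin N)) :
    letI Vd := ContinuousLinearMap.adjoint V
    letI T := Vd ∘L V - 1
    letI Qp := V ∘L Q ∘L Vd
    letI Qp' := V ∘L Q' ∘L Vd
    ‖(Qp ∘L Qp' - Qp' ∘L Qp) (V ψ)‖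
      ≤ 2 * ‖V‖ ^ 2 * ‖T‖ * ‖Q‖ * ‖Q'‖ * ‖V ψ‖ := by
  set Vd := ContinuousLinearMap.adjoint V with hVd
  set T : EuclideanSpace ℂ (Fin N) →L[ℂ] EuclideanSpace ℂ (Fin N) := Vd ∘L V - 1 with hT
  have hVV : Vd ∘L V = T + 1 := by rw [hT, sub_add_cancel]
  set A : EuclideanSpace ℂ (Fin N) →L[ℂ] EuclideanSpace ℂ (Fin N) :=
    Q ∘L T ∘L Q' - Q' ∘L T ∘L Q with hA
  have hEq : (V ∘L Q ∘L Vd) ∘L (V ∘L Q' ∘L Vd) - (V ∘L Q' ∘L Vd) ∘L (V ∘L Q ∘L Vd)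
      = V ∘L A ∘L Vd := by
    have h1 : (V ∘L Q ∘L Vd) ∘L (V ∘L Q' ∘L Vd)
        = V ∘L (Q ∘L (Vd ∘L V) ∘L Q') ∘L Vd := by
      simp only [comp_assoc]
    have h2 : (V ∘L Q' ∘L Vd) ∘L (V ∘L Q ∘L Vd)
        = V ∘L (Q' ∘L (Vd ∘L V) ∘L Q) ∘L Vd := by
      simp only [comp_assoc]
    rw [h1, h2, hVV]
    simp only [comp_add, add_comp, comp_id, one_def, id_comp, hA, sub_comp, comp_sub]
    rw [hcomm]
    abel
  have hnormVd : ‖Vd‖ = ‖V‖ := by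
    rw [hVd]; exact ContinuousLinearMap.adjoint.norm_map V
  have hAle : ‖A‖ ≤ 2 * ‖T‖ * ‖Q‖ * ‖Q'‖ := by
    calc ‖A‖ ≤ ‖Q ∘L T ∘L Q'‖ + ‖Q' ∘L T ∘L Q‖ := norm_sub_le _ _
      _ ≤ ‖Q‖ * (‖T‖ * ‖Q'‖) + ‖Q'‖ * (‖T‖ * ‖Q‖) := by
          gcongr
          · exact (opNorm_comp_le _ _).trans (by gcongr; exact opNorm_comp_le _ _)
          · exact (opNorm_comp_le _ _).trans (by gcongr; exact opNorm_comp_le _ _)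
      _ = 2 * ‖T‖ * ‖Q‖ * ‖Q'‖ := by ring
  rw [hEq]
  calc ‖(V ∘L A ∘L Vd) (V ψ)‖ = ‖V (A (Vd (V ψ)))‖ := by simp [comp_apply]
    _ ≤ ‖V‖ * ‖A (Vd (V ψ))‖ := le_opNorm _ _
    _ ≤ ‖V‖ * (‖A‖ * ‖Vd (V ψ)‖) :=
        mul_le_mul_of_nonneg_left (le_opNorm _ _) (norm_nonneg _)
    _ ≤ ‖V‖ * (‖A‖ * (‖Vd‖ * ‖V ψ‖)) :=
        mul_le_mul_of_nonneg_left
          (mul_le_mul_of_nonneg_left (le_opNorm _ _) (norm_nonneg _)) (norm_nonneg _)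
    _ ≤ ‖V‖ * ((2 * ‖T‖ * ‖Q‖ * ‖Q'‖) * (‖Vd‖ * ‖V ψ‖)) :=
        mul_le_mul_of_nonneg_left
          (mul_le_mul_of_nonneg_right hAle (by positivity)) (norm_nonneg _)
    _ = 2 * ‖V‖ ^ 2 * ‖T‖ * ‖Q‖ * ‖Q'‖ * ‖V ψ‖ := by rw [hnormVd]; ring
end

section
/- Suppose P = V†V, |ψ⟩ ∈ H_N is a unit vector, Q^{(1)},…,Q^{(M)} are operators on H_N of operator norm at most 1, and for every partial product S = Q^{(m)}⋯Q^{(1)} with 0 ≤ m ≤ M one has ‖P S|ψ⟩ − S|ψ⟩‖ ≤ ε. Then |⟨ψ|P Q^{(M)} P Q^{(M−1)} P ⋯ P Q^{(1)} P|ψ⟩ − ⟨ψ|Q^{(M)}⋯Q^{(1)}|ψ⟩| ≤ (M+1)ε(1+ε)^{M}. -/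
open ContinuousLinearMap

/-!
Write `e m = ‖R m - S m ψ‖`. Since `R (m+1) - S (m+1) ψ = P Q (R m - S m ψ) + (P - 1) S (m+1) ψ`,
the bounds `‖P Q‖ ≤ 1 + ε` and `‖(P - 1) S (m+1) ψ‖ ≤ ε` give `e (m+1) ≤ (1 + ε) e m + ε`,
with `e 0 ≤ ε`; this discrete Grönwall recursion solves to `e m ≤ (m+1) ε (1+ε)^m`.
Pairing with the unit vector `ψ` costs nothing by Cauchy–Schwarz.
-/

lemma le_succ_mul_mul_one_add_pow {e : ℕ → ℝ} {ε : ℝ} {M : ℕ} (hε : 0 ≤ ε) (h0 : e 0 ≤ ε)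
    (hstep : ∀ m < M, e (m + 1) ≤ (1 + ε) * e m + ε) :
    ∀ m ≤ M, e m ≤ (m + 1) * ε * (1 + ε) ^ m := by
  intro m hm
  induction m with
  | zero => simpa using h0
  | succ m ih =>
    have hpow : 1 ≤ (1 + ε) ^ (m + 1) := one_le_pow₀ (by linarith)
    calc e (m + 1) ≤ (1 + ε) * e m + ε := hstep m hm
      _ ≤ (1 + ε) * ((m + 1) * ε * (1 + ε) ^ m) + ε := by grw [ih (by omega)]
      _ = (m + 1) * ε * (1 + ε) ^ (m + 1) + ε * 1 := by ring
      _ ≤ (m + 1) * ε * (1 + ε) ^ (m + 1) + ε * (1 + ε) ^ (m + 1) := by gcongr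
      _ = ((m + 1 : ℕ) + 1) * ε * (1 + ε) ^ (m + 1) := by push_cast; ring

lemma norm_apply_apply_sub_apply_le {𝕜 E : Type*} [NontriviallyNormedField 𝕜]
    [SeminormedAddCommGroup E] [NormedSpace 𝕜 E] {P A : E →L[𝕜] E} {c : ℝ}
    (hP : ‖P‖ ≤ c) (hA : ‖A‖ ≤ 1) (x y : E) :
    ‖P (A x) - A y‖ ≤ c * ‖x - y‖ + ‖P (A y) - A y‖ :=
  calc ‖P (A x) - A y‖ = ‖P (A (x - y)) + (P (A y) - A y)‖ := by
        simp only [map_sub]; abel_nf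
    _ ≤ ‖P (A (x - y))‖ + ‖P (A y) - A y‖ := norm_add_le _ _
    _ ≤ c * ‖x - y‖ + ‖P (A y) - A y‖ := by
        gcongr
        calc ‖P (A (x - y))‖ ≤ ‖P‖ * (‖A‖ * ‖x - y‖) := (P.le_opNorm _).trans <| by
              gcongr; exact A.le_opNorm _
          _ ≤ c * (1 * ‖x - y‖) := by gcongr; exact (norm_nonneg _).trans hP
          _ = c * ‖x - y‖ := by rw [one_mul]

theorem stmt_3_general (N M : ℕ) (ε : ℝ) (hε : 0 ≤ ε)
    (Q : ℕ → (EuclideanSpace ℂ (Fin N) →L[ℂ] EuclideanSpace ℂ (Fin N)))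
    (hQ : ∀ i, ‖Q i‖ ≤ 1)
    (ψ : EuclideanSpace ℂ (Fin N)) (hψ : ‖ψ‖ = 1)
    (P : EuclideanSpace ℂ (Fin N) →L[ℂ] EuclideanSpace ℂ (Fin N))
    (hPnorm : ‖P‖ ≤ 1 + ε)
    (S : ℕ → (EuclideanSpace ℂ (Fin N) →L[ℂ] EuclideanSpace ℂ (Fin N)))
    (hS0 : S 0 = 1) (hSsucc : ∀ m, S (m + 1) = Q (m + 1) ∘L S m)
    (hclose : ∀ m ≤ M, ‖P (S m ψ) - S m ψ‖ ≤ ε)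
    (R : ℕ → EuclideanSpace ℂ (Fin N))
    (hR0 : R 0 = P ψ) (hRsucc : ∀ m, R (m + 1) = P (Q (m + 1) (R m))) :
    ‖(inner ℂ ψ (R M) : ℂ) - (inner ℂ ψ (S M ψ) : ℂ)‖ ≤ (M + 1) * ε * (1 + ε) ^ M := by
  have hstep : ∀ m < M, ‖R (m + 1) - S (m + 1) ψ‖ ≤ (1 + ε) * ‖R m - S m ψ‖ + ε := by
    intro m hm
    rw [hRsucc, hSsucc, comp_apply]
    refine (norm_apply_apply_sub_apply_le hPnorm (hQ _) _ _).trans ?_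
    grw [← comp_apply (Q _), ← hSsucc, hclose (m + 1) hm]
  have h0 : ‖R 0 - S 0 ψ‖ ≤ ε := by simpa [hR0, hS0] using hclose 0 M.zero_le
  calc ‖(inner ℂ ψ (R M) : ℂ) - inner ℂ ψ (S M ψ)‖ = ‖(inner ℂ ψ (R M - S M ψ) : ℂ)‖ := by
        rw [inner_sub_right]
    _ ≤ ‖ψ‖ * ‖R M - S M ψ‖ := norm_inner_le_norm _ _
    _ ≤ (M + 1) * ε * (1 + ε) ^ M := by
        rw [hψ, one_mul]
        exact le_succ_mul_mul_one_add_pow (e := fun m ↦ ‖R m - S m ψ‖) hε h0 hstep M le_rfl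

/-- quantitative approximate homomorphism property / Remark 1.
`S m = Q^{(m)}⋯Q^{(1)}` are the partial products, `R m = P Q^{(m)} P ⋯ P Q^{(1)} P ψ`
(so that `⟨ψ, R M⟩ = ⟨ψ_p|∏ Q_p^{(i)}|ψ_p⟩`).  If every partial product stays
`ε`-close to the `P`-fixed subspace and `‖P‖ ≤ 1 + ε`, then the spoofed `M`-point
function is `(M+1)ε(1+ε)^M`-close to the true one. -/
theorem stmt_3 (N n M : ℕ) (ε : ℝ) (hε : 0 ≤ ε)
    (V : EuclideanSpace ℂ (Fin N) →L[ℂ] EuclideanSpace ℂ (Fin n))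
    (Q : ℕ → (EuclideanSpace ℂ (Fin N) →L[ℂ] EuclideanSpace ℂ (Fin N)))
    (hQ : ∀ i, ‖Q i‖ ≤ 1)
    (ψ : EuclideanSpace ℂ (Fin N)) (hψ : ‖ψ‖ = 1)
    (P : EuclideanSpace ℂ (Fin N) →L[ℂ] EuclideanSpace ℂ (Fin N))
    (hP : P = ContinuousLinearMap.adjoint V ∘L V)
    (hPnorm : ‖P‖ ≤ 1 + ε)
    (S : ℕ → (EuclideanSpace ℂ (Fin N) →L[ℂ] EuclideanSpace ℂ (Fin N)))
    (hS0 : S 0 = 1) (hSsucc : ∀ m, S (m + 1) = Q (m + 1) ∘L S m)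
    (hclose : ∀ m ≤ M, ‖P (S m ψ) - S m ψ‖ ≤ ε)
    (R : ℕ → EuclideanSpace ℂ (Fin N))
    (hR0 : R 0 = P ψ) (hRsucc : ∀ m, R (m + 1) = P (Q (m + 1) (R m))) :
    ‖(inner ℂ ψ (R M) : ℂ) - (inner ℂ ψ (S M ψ) : ℂ)‖ ≤ (M + 1) * ε * (1 + ε) ^ M :=
  stmt_3_general N M ε hε Q hQ ψ hψ P hPnorm S hS0 hSsucc hclose R hR0 hRsucc
end

section
/- Let P = V†V with ‖(P − I)x‖ ≤ ε‖x‖ for all x in a subspace W that is invariant under operators Q^{(1)},…,Q^{(M)} with ‖Q^{(i)}‖ ≤ 1, and let |ψ⟩ ∈ W be a unit vector with P|ψ⟩ = |ψ⟩. Then |⟨ψ|Q^{(M)} P Q^{(M−1)} ⋯ P Q^{(1)}|ψ⟩ − ⟨ψ|Q^{(M)} ⋯ Q^{(1)}|ψ⟩| ≤ (1+ε)^{M−1} − 1 ≤ (M−1)ε e^{(M−1)ε}. -/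
open ContinuousLinearMap

/-! Compare the interleaved vectors `R m = Q m P ⋯ P Q 1 ψ` with the plain products
`S m ψ = Q m ⋯ Q 1 ψ` step by step. Every `S m ψ` has norm at most `1`, and every `R m` stays in
`W`, where `P` moves a vector `r` by at most `ε ‖r‖`. Writing `d m = ‖R m - S m ψ‖`, one step
gives `1 + d (m+1) ≤ (1 + ε) (1 + d m)`, so `d m ≤ (1 + ε) ^ (m - 1) - 1`; pairing with the unit
vector `ψ` does not increase this. Finally `(1 + ε) ^ k ≤ exp (k ε)` and `exp x - 1 ≤ x exp x`. -/

namespace Real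

lemma exp_sub_one_le_mul_exp (x : ℝ) : exp x - 1 ≤ x * exp x := by
  have h : (1 - x) * exp x ≤ exp (-x) * exp x :=
    mul_le_mul_of_nonneg_right (one_sub_le_exp_neg x) (exp_pos x).le
  rw [← exp_add, neg_add_cancel, exp_zero] at h
  linarith

lemma one_add_pow_le_exp_mul {ε : ℝ} (hε : -1 ≤ ε) (k : ℕ) : (1 + ε) ^ k ≤ exp (k * ε) := by
  rw [exp_nat_mul]
  exact pow_le_pow_left₀ (by linarith) (by linarith [add_one_le_exp ε]) k

lemma one_add_pow_sub_one_le_mul_exp {ε : ℝ} (hε : -1 ≤ ε) (k : ℕ) :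
    (1 + ε) ^ k - 1 ≤ k * ε * exp (k * ε) := by
  linarith [one_add_pow_le_exp_mul hε k, exp_sub_one_le_mul_exp (k * ε)]

end Real

section

variable {𝕜 E : Type*} [NontriviallyNormedField 𝕜] [SeminormedAddCommGroup E] [NormedSpace 𝕜 E]

lemma norm_apply_comp_sub_apply_le {Q P : E →L[𝕜] E} (hQ : ‖Q‖ ≤ 1) {r s : E} {ε d : ℝ}
    (hε : 0 ≤ ε) (hPr : ‖P r - r‖ ≤ ε * ‖r‖) (hs : ‖s‖ ≤ 1) (hrs : ‖r - s‖ ≤ d) :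
    ‖Q (P r) - Q s‖ ≤ (1 + ε) * (1 + d) - 1 := by
  have hr : ‖r‖ ≤ 1 + d := by
    calc ‖r‖ ≤ ‖r - s‖ + ‖s‖ := norm_le_norm_sub_add r s
      _ ≤ 1 + d := by linarith
  calc ‖Q (P r) - Q s‖ = ‖Q (P r - s)‖ := by rw [map_sub]
    _ ≤ ‖P r - s‖ := by simpa using Q.le_of_opNorm_le hQ (P r - s)
    _ ≤ ‖P r - r‖ + ‖r - s‖ := norm_sub_le_norm_sub_add_norm_sub _ _ _
    _ ≤ ε * (1 + d) + d := add_le_add (hPr.trans (mul_le_mul_of_nonneg_left hr hε)) hrs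
    _ = (1 + ε) * (1 + d) - 1 := by ring

variable {Q : ℕ → E →L[𝕜] E} {P : E →L[𝕜] E} {S : ℕ → E →L[𝕜] E} {R : ℕ → E} {ψ : E}

lemma norm_prod_apply_le_one (hQ : ∀ i, ‖Q i‖ ≤ 1) (hψ : ‖ψ‖ ≤ 1) (hS1 : S 1 = Q 1)
    (hSsucc : ∀ m, 1 ≤ m → S (m + 1) = Q (m + 1) ∘L S m) {m : ℕ} (hm : 1 ≤ m) :
    ‖S m ψ‖ ≤ 1 := by
  induction m, hm using Nat.le_induction with
  | base => simpa [hS1] using (Q 1).le_of_opNorm_le_of_le (hQ 1) hψ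
  | succ m hm ih => simpa [hSsucc m hm] using (Q (m + 1)).le_of_opNorm_le_of_le (hQ _) ih

lemma interleaved_mem {W : Submodule 𝕜 E} (hPW : ∀ x ∈ W, P x - x ∈ W)
    (hQW : ∀ i, ∀ x ∈ W, Q i x ∈ W) (hψ : ψ ∈ W) (hR1 : R 1 = Q 1 ψ)
    (hRsucc : ∀ m, 1 ≤ m → R (m + 1) = Q (m + 1) (P (R m))) {m : ℕ} (hm : 1 ≤ m) :
    R m ∈ W := by
  induction m, hm using Nat.le_induction with
  | base => exact hR1 ▸ hQW 1 ψ hψ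
  | succ m hm ih =>
    rw [hRsucc m hm]
    exact hQW _ _ (by simpa using W.add_mem (hPW _ ih) ih)

lemma norm_interleaved_sub_prod_apply_le {W : Submodule 𝕜 E} {ε : ℝ} (hε : 0 ≤ ε)
    (hPW : ∀ x ∈ W, ‖P x - x‖ ≤ ε * ‖x‖) (hPinv : ∀ x ∈ W, P x - x ∈ W)
    (hQ : ∀ i, ‖Q i‖ ≤ 1) (hQW : ∀ i, ∀ x ∈ W, Q i x ∈ W) (hψW : ψ ∈ W) (hψ : ‖ψ‖ ≤ 1)
    (hS1 : S 1 = Q 1) (hSsucc : ∀ m, 1 ≤ m → S (m + 1) = Q (m + 1) ∘L S m)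
    (hR1 : R 1 = Q 1 ψ) (hRsucc : ∀ m, 1 ≤ m → R (m + 1) = Q (m + 1) (P (R m)))
    {m : ℕ} (hm : 1 ≤ m) :
    ‖R m - S m ψ‖ ≤ (1 + ε) ^ (m - 1) - 1 := by
  induction m, hm using Nat.le_induction with
  | base => simp [hR1, hS1]
  | succ m hm ih =>
    have hRW := interleaved_mem hPinv hQW hψW hR1 hRsucc hm
    have hSψ := norm_prod_apply_le_one hQ hψ hS1 hSsucc hm
    have hstep := norm_apply_comp_sub_apply_le (hQ (m + 1)) hε (hPW _ hRW) hSψ ih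
    rw [hRsucc m hm, hSsucc m hm, comp_apply]
    calc _ ≤ (1 + ε) * (1 + ((1 + ε) ^ (m - 1) - 1)) - 1 := hstep
      _ = (1 + ε) ^ (m + 1 - 1) - 1 := by
        rw [add_sub_cancel, Nat.add_sub_cancel, ← pow_succ', Nat.sub_add_cancel hm]

end

theorem stmt_17_general (N M : ℕ) (hM : 1 ≤ M) (ε : ℝ) (hε : 0 ≤ ε)
    (P : EuclideanSpace ℂ (Fin N) →L[ℂ] EuclideanSpace ℂ (Fin N))
    (W : Submodule ℂ (EuclideanSpace ℂ (Fin N)))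
    (hPW : ∀ x ∈ W, ‖P x - x‖ ≤ ε * ‖x‖)
    (hPinv : ∀ x ∈ W, P x - x ∈ W)
    (Q : ℕ → (EuclideanSpace ℂ (Fin N) →L[ℂ] EuclideanSpace ℂ (Fin N)))
    (hQnorm : ∀ i, ‖Q i‖ ≤ 1)
    (hQinv : ∀ i, ∀ x ∈ W, Q i x ∈ W)
    (ψ : EuclideanSpace ℂ (Fin N)) (hψW : ψ ∈ W) (hψ : ‖ψ‖ = 1)
    (S : ℕ → (EuclideanSpace ℂ (Fin N) →L[ℂ] EuclideanSpace ℂ (Fin N)))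
    (hS1 : S 1 = Q 1) (hSsucc : ∀ m, 1 ≤ m → S (m + 1) = Q (m + 1) ∘L S m)
    (R : ℕ → EuclideanSpace ℂ (Fin N))
    (hR1 : R 1 = Q 1 ψ) (hRsucc : ∀ m, 1 ≤ m → R (m + 1) = Q (m + 1) (P (R m))) :
    ‖(inner ℂ ψ (R M) : ℂ) - (inner ℂ ψ (S M ψ) : ℂ)‖ ≤ (1 + ε) ^ (M - 1) - 1 ∧
    (1 + ε) ^ (M - 1) - 1 ≤ (M - 1 : ℝ) * ε * Real.exp ((M - 1 : ℝ) * ε) := by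
  have hdist := norm_interleaved_sub_prod_apply_le hε hPW hPinv hQnorm hQinv hψW hψ.le
    hS1 hSsucc hR1 hRsucc hM
  refine ⟨?_, ?_⟩
  · calc ‖(inner ℂ ψ (R M) : ℂ) - inner ℂ ψ (S M ψ)‖ = ‖(inner ℂ ψ (R M - S M ψ) : ℂ)‖ := by
          rw [inner_sub_right]
      _ ≤ ‖ψ‖ * ‖R M - S M ψ‖ := norm_inner_le_norm _ _
      _ ≤ (1 + ε) ^ (M - 1) - 1 := by rwa [hψ, one_mul]
  · simpa [Nat.cast_sub hM] using Real.one_add_pow_sub_one_le_mul_exp (by linarith) (M - 1)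

/-- If `P = V†V` satisfies `‖(P−I)x‖ ≤ ε‖x‖` on a subspace `W` invariant under
the norm-`≤1` operators `Q^{(i)}` (and under `P−I`), and `ψ ∈ W` is a unit vector with
`Pψ = ψ`, then the spoofed `M`-point function `⟨ψ|Q^{(M)} P Q^{(M−1)} ⋯ P Q^{(1)}|ψ⟩`
differs from the true one by at most `(1+ε)^{M−1} − 1 ≤ (M−1)ε e^{(M−1)ε}`. -/
theorem stmt_17 (N n M : ℕ) (hM : 1 ≤ M) (ε : ℝ) (hε : 0 ≤ ε)
    (V : EuclideanSpace ℂ (Fin N) →L[ℂ] EuclideanSpace ℂ (Fin n))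
    (P : EuclideanSpace ℂ (Fin N) →L[ℂ] EuclideanSpace ℂ (Fin N))
    (hP : P = ContinuousLinearMap.adjoint V ∘L V)
    (W : Submodule ℂ (EuclideanSpace ℂ (Fin N)))
    (hPW : ∀ x ∈ W, ‖P x - x‖ ≤ ε * ‖x‖)
    (hPinv : ∀ x ∈ W, P x - x ∈ W)
    (Q : ℕ → (EuclideanSpace ℂ (Fin N) →L[ℂ] EuclideanSpace ℂ (Fin N)))
    (hQnorm : ∀ i, ‖Q i‖ ≤ 1)
    (hQinv : ∀ i, ∀ x ∈ W, Q i x ∈ W)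
    (ψ : EuclideanSpace ℂ (Fin N)) (hψW : ψ ∈ W) (hψ : ‖ψ‖ = 1) (hψfix : P ψ = ψ)
    (S : ℕ → (EuclideanSpace ℂ (Fin N) →L[ℂ] EuclideanSpace ℂ (Fin N)))
    (hS1 : S 1 = Q 1) (hSsucc : ∀ m, 1 ≤ m → S (m + 1) = Q (m + 1) ∘L S m)
    (R : ℕ → EuclideanSpace ℂ (Fin N))
    (hR1 : R 1 = Q 1 ψ) (hRsucc : ∀ m, 1 ≤ m → R (m + 1) = Q (m + 1) (P (R m))) :
    ‖(inner ℂ ψ (R M) : ℂ) - (inner ℂ ψ (S M ψ) : ℂ)‖ ≤ (1 + ε) ^ (M - 1) - 1 ∧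
    (1 + ε) ^ (M - 1) - 1 ≤ (M - 1 : ℝ) * ε * Real.exp ((M - 1 : ℝ) * ε) :=
  stmt_17_general N M hM ε hε P W hPW hPinv Q hQnorm hQinv ψ hψW hψ S hS1 hSsucc R hR1 hRsucc
end
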